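/- arXiv:1303.0551 — 4 statements merged into one kernel-verified Lean document; each statement's English description precedes it below -/
import Mathlib

section
/- For a positive semidefinite matrix A, the maximum of x^T A x over unit-norm k-sparse vectors x is at least (k/n)·λ_1, where λ_1 is the largest eigenvalue of A. -/
/-!
Keep the `k` coordinates carrying the most mass of `v₁`; they carry at least `k/n` of it, so the
restriction `u` of `v₁` to them has `‖u‖² = c ≥ k/n`. Since `uᵀAv₁ = λ₁ (u ⬝ v₁) = λ₁ c`, the
Cauchy–Schwarz inequality for the semi-inner product `(x, y) ↦ xᵀAy` gives
`λ₁² c² ≤ (uᵀAu) λ₁`, i.e. the Rayleigh quotient of `u` is at least `λ₁ c ≥ (k/n) λ₁`.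
-/

open Matrix Finset

theorem Finset.exists_subset_card_eq_mul_sum_le {α : Type*} [DecidableEq α] (f : α → ℝ)
    {k : ℕ} {T : Finset α} (hk : k ≤ #T) :
    ∃ S ⊆ T, #S = k ∧ k * ∑ i ∈ T, f i ≤ #T * ∑ i ∈ S, f i := by
  obtain rfl | hk0 := k.eq_zero_or_pos
  · exact ⟨∅, empty_subset T, rfl, by simp⟩
  obtain ⟨m, hm⟩ := Nat.exists_eq_add_of_le hk
  induction m generalizing T with
  | zero => exact ⟨T, subset_rfl, hm, by rw [hm, add_zero]⟩
  | succ m ih =>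
    -- Removing a minimal element does not decrease the mean of `f`.
    obtain ⟨t, htT, hmin⟩ := T.exists_min_image f (card_pos.mp (by omega))
    have hcard : #(T.erase t) = k + m := by rw [card_erase_of_mem htT]; omega
    obtain ⟨S, hST, hSk, hS⟩ := ih (by omega) hcard
    refine ⟨S, hST.trans (erase_subset t T), hSk, ?_⟩
    have hmean : #T * f t ≤ ∑ i ∈ T, f i := by
      simpa only [nsmul_eq_mul] using card_nsmul_le_sum T f (f t) hmin
    rw [sum_erase_eq_sub htT, hcard] at hS
    have hT : (#T : ℝ) = k + m + 1 := by rw [hm]; push_cast; ring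
    rw [hT] at hmean ⊢
    have hpos : (0 : ℝ) < k + m := by positivity
    refine le_of_mul_le_mul_left ?_ hpos
    calc ((k : ℝ) + m) * (k * ∑ i ∈ T, f i)
        ≤ k * ((k + m + 1) * (∑ i ∈ T, f i - f t)) := by nlinarith
      _ ≤ (k + m + 1) * ((k + m) * ∑ i ∈ S, f i) := by push_cast at hS; nlinarith
      _ = (k + m) * ((k + m + 1) * ∑ i ∈ S, f i) := by ring

theorem indicator_dotProduct {ι : Type*} [Fintype ι] (S : Finset ι) (v w : ι → ℝ) :
    (S : Set ι).indicator v ⬝ᵥ w = ∑ i ∈ S, v i * w i := by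
  rw [dotProduct, ← Finset.sum_indicator_subset (fun i ↦ v i * w i) (subset_univ S)]
  simp only [Set.indicator_mul_left]

theorem inv_sqrt_smul_dotProduct_inv_sqrt_smul {ι : Type*} [Fintype ι] (u w : ι → ℝ) {c : ℝ}
    (hc : 0 ≤ c) : ((√c)⁻¹ • u) ⬝ᵥ ((√c)⁻¹ • w) = (u ⬝ᵥ w) / c := by
  rw [smul_dotProduct, dotProduct_smul, smul_smul, smul_eq_mul, ← sq, inv_pow,
    Real.sq_sqrt hc, inv_mul_eq_div]

namespace Matrix.PosSemidef

variable {ι : Type*} [Fintype ι] {A : Matrix ι ι ℝ}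

theorem dotProduct_mulVec_sq_le (hA : A.PosSemidef) (u w : ι → ℝ) :
    (u ⬝ᵥ A *ᵥ w) ^ 2 ≤ (u ⬝ᵥ A *ᵥ u) * (w ⬝ᵥ A *ᵥ w) := by
  let _ := A.toSeminormedAddCommGroup hA
  let _ := A.toInnerProductSpace hA
  have hinner (x y : ι → ℝ) : inner ℝ x y = x ⬝ᵥ A *ᵥ y := dotProduct_comm _ _
  simpa only [hinner, pow_two] using real_inner_mul_inner_self_le u w

theorem nonneg_of_mulVec_eq_smul (hA : A.PosSemidef) {μ : ℝ} {v : ι → ℝ}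
    (hv : v ⬝ᵥ v = 1) (hAv : A *ᵥ v = μ • v) : 0 ≤ μ := by
  simpa [hAv, dotProduct_smul, hv] using hA.dotProduct_mulVec_nonneg v

theorem mul_sq_dotProduct_le_of_mulVec_eq_smul (hA : A.PosSemidef) {μ : ℝ} {v : ι → ℝ}
    (hv : v ⬝ᵥ v = 1) (hAv : A *ᵥ v = μ • v) (u : ι → ℝ) :
    μ * (u ⬝ᵥ v) ^ 2 ≤ u ⬝ᵥ A *ᵥ u := by
  have hvAv : v ⬝ᵥ A *ᵥ v = μ := by rw [hAv, dotProduct_smul, hv, smul_eq_mul, mul_one]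
  have huAv : u ⬝ᵥ A *ᵥ v = μ * (u ⬝ᵥ v) := by rw [hAv, dotProduct_smul, smul_eq_mul]
  have hcs := hA.dotProduct_mulVec_sq_le u v
  rw [hvAv, huAv] at hcs
  have huAu : 0 ≤ u ⬝ᵥ A *ᵥ u := hA.dotProduct_mulVec_nonneg u
  obtain hμ | hμ := (hA.nonneg_of_mulVec_eq_smul hv hAv).eq_or_lt
  · rw [← hμ, zero_mul]
    exact huAu
  · exact le_of_mul_le_mul_left (by nlinarith) hμ

theorem exists_support_subset_mul_sum_sq_le (hA : A.PosSemidef) {μ : ℝ} {v : ι → ℝ}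
    (hv : v ⬝ᵥ v = 1) (hAv : A *ᵥ v = μ • v) (S : Finset ι) (hS : 0 < ∑ i ∈ S, v i ^ 2) :
    ∃ x : ι → ℝ, x ⬝ᵥ x = 1 ∧ Function.support x ⊆ S ∧
      μ * ∑ i ∈ S, v i ^ 2 ≤ x ⬝ᵥ A *ᵥ x := by
  set c := ∑ i ∈ S, v i ^ 2
  set u := (S : Set ι).indicator v
  have huv : u ⬝ᵥ v = c := by simp only [u, c, indicator_dotProduct, sq]
  have huu : u ⬝ᵥ u = c := by
    rw [indicator_dotProduct]
    exact sum_congr rfl fun i hi ↦ by simp [u, hi, sq]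
  refine ⟨(√c)⁻¹ • u, ?_, ?_, ?_⟩
  · rw [inv_sqrt_smul_dotProduct_inv_sqrt_smul u u hS.le, huu, div_self hS.ne']
  · exact (Function.support_const_smul_subset _ _).trans Set.support_indicator_subset
  · rw [mulVec_smul, inv_sqrt_smul_dotProduct_inv_sqrt_smul u _ hS.le, le_div_iff₀ hS]
    simpa [← huv, pow_two, mul_assoc] using hA.mul_sq_dotProduct_le_of_mulVec_eq_smul hv hAv u

end Matrix.PosSemidef

theorem stmt_1_general {n k : ℕ} (A : Matrix (Fin n) (Fin n) ℝ)
    (lam1 : ℝ) (v1 : Fin n → ℝ)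
    (hPSD : A.PosSemidef)
    (hv1_unit : ∑ i, v1 i ^ 2 = 1)
    (hv1_eig : A.mulVec v1 = lam1 • v1)
    (hk1 : 1 ≤ k) (hkn : k ≤ n) :
    ∃ x : Fin n → ℝ, (∑ i, x i ^ 2 = 1) ∧ (Function.support x).ncard ≤ k ∧
      ((k : ℝ) / n) * lam1 ≤ x ⬝ᵥ A.mulVec x := by
  obtain ⟨S, -, hSk, hS⟩ :=
    (univ : Finset (Fin n)).exists_subset_card_eq_mul_sum_le (fun i ↦ v1 i ^ 2) (k := k)
      (by simpa using hkn)
  rw [card_univ, Fintype.card_fin, hv1_unit, mul_one] at hS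
  have hk : (0 : ℝ) < k / n := div_pos (by exact_mod_cast hk1) (by exact_mod_cast hk1.trans hkn)
  have hkS : (k : ℝ) / n ≤ ∑ i ∈ S, v1 i ^ 2 := by
    rw [div_le_iff₀ (by exact_mod_cast hk1.trans hkn)]
    linarith
  have hv1 : v1 ⬝ᵥ v1 = 1 := by simpa only [dotProduct, sq] using hv1_unit
  obtain ⟨x, hx, hxS, hxA⟩ :=
    hPSD.exists_support_subset_mul_sum_sq_le hv1 hv1_eig S (hk.trans_le hkS)
  refine ⟨x, by simpa only [dotProduct, sq] using hx, ?_, ?_⟩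
  · calc (Function.support x).ncard ≤ (S : Set (Fin n)).ncard :=
          Set.ncard_le_ncard hxS S.finite_toSet
      _ = k := by rw [Set.ncard_coe_finset, hSk]
  · calc (k : ℝ) / n * lam1 ≤ lam1 * ∑ i ∈ S, v1 i ^ 2 := by
          rw [mul_comm]
          gcongr
          exact hPSD.nonneg_of_mulVec_eq_smul hv1 hv1_eig
      _ ≤ x ⬝ᵥ A *ᵥ x := hxA

/-- For a PSD matrix `A` with largest eigenvalue `λ₁` (with unit eigenvector `v₁`),
the maximum of `xᵀAx` over unit `k`-sparse vectors is at least `(k/n)·λ₁`. -/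
theorem stmt_1 {n k : ℕ} (A : Matrix (Fin n) (Fin n) ℝ)
    (lam1 : ℝ) (v1 : Fin n → ℝ)
    (hPSD : A.PosSemidef)
    (hv1_unit : ∑ i, v1 i ^ 2 = 1)
    (hv1_eig : A.mulVec v1 = lam1 • v1)
    (hlam1_max : ∀ (μ : ℝ) (w : Fin n → ℝ), w ≠ 0 → A.mulVec w = μ • w → μ ≤ lam1)
    (hk1 : 1 ≤ k) (hkn : k ≤ n) :
    ∃ x : Fin n → ℝ, (∑ i, x i ^ 2 = 1) ∧ (Function.support x).ncard ≤ k ∧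
      ((k : ℝ) / n) * lam1 ≤ x ⬝ᵥ A.mulVec x :=
  stmt_1_general A lam1 v1 hPSD hv1_unit hv1_eig hk1 hkn
end

section
/- With OPT and OPT_d defined as the k-sparse maxima of the quadratic forms of A and its rank-d truncation A_d respectively, the ratio OPT_d/OPT is at least 1 − λ_{d+1}/OPT, assuming OPT > 0. -/
open Matrix BigOperators

/-! Let `x` be a unit `k`-sparse vector attaining `OPT`. Writing `A = ∑ λᵢ vᵢ vᵢᵀ`, the form
`xᵀ A x` splits as `xᵀ A_d x` plus the tail `∑_{i ≥ d} λᵢ ⟨vᵢ, x⟩²`, and by monotonicity of the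
eigenvalues and Bessel's inequality the tail is at most `λ_{d+1} ‖x‖² = λ_{d+1}`. Hence
`OPT ≤ OPT_d + λ_{d+1}`; divide by `OPT`. -/

theorem dotProduct_sum_smul_vecMulVec_mulVec {R m ι : Type*} [CommRing R] [Fintype m]
    (s : Finset ι) (c : ι → R) (v : ι → m → R) (x : m → R) :
    x ⬝ᵥ (∑ i ∈ s, c i • vecMulVec (v i) (v i)) *ᵥ x = ∑ i ∈ s, c i * (v i ⬝ᵥ x) ^ 2 := by
  simp only [sum_mulVec, dotProduct_sum, smul_mulVec, dotProduct_smul, vecMulVec_mulVec,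
    op_smul_eq_smul, smul_eq_mul, dotProduct_comm x (v _), sq]

theorem sum_sq_dotProduct_le_of_orthonormal {m ι : Type*} [Fintype m] [DecidableEq ι]
    (v : ι → m → ℝ) (hv : ∀ i j, v i ⬝ᵥ v j = if i = j then (1 : ℝ) else 0)
    (s : Finset ι) (x : m → ℝ) :
    ∑ i ∈ s, (v i ⬝ᵥ x) ^ 2 ≤ ∑ j, x j ^ 2 := by
  have hon : Orthonormal ℝ fun i => (WithLp.toLp 2 (v i) : EuclideanSpace ℝ m) := by
    rw [orthonormal_iff_ite]
    intro i j
    simpa [EuclideanSpace.inner_toLp_toLp, dotProduct_comm] using hv i j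
  have hbessel := hon.sum_inner_products_le (WithLp.toLp 2 x : EuclideanSpace ℝ m) (s := s)
  rw [EuclideanSpace.real_norm_sq_eq] at hbessel
  simpa [EuclideanSpace.inner_toLp_toLp, dotProduct_comm] using hbessel

theorem sum_mul_sq_dotProduct_le_of_orthonormal {m ι : Type*} [Fintype m] [DecidableEq ι]
    (v : ι → m → ℝ) (hv : ∀ i j, v i ⬝ᵥ v j = if i = j then (1 : ℝ) else 0)
    (s : Finset ι) (c : ι → ℝ) (b : ℝ) (hb : 0 ≤ b) (hc : ∀ i ∈ s, c i ≤ b) (x : m → ℝ) :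
    ∑ i ∈ s, c i * (v i ⬝ᵥ x) ^ 2 ≤ b * ∑ j, x j ^ 2 :=
  calc ∑ i ∈ s, c i * (v i ⬝ᵥ x) ^ 2 ≤ ∑ i ∈ s, b * (v i ⬝ᵥ x) ^ 2 :=
        Finset.sum_le_sum fun i hi => mul_le_mul_of_nonneg_right (hc i hi) (sq_nonneg _)
    _ = b * ∑ i ∈ s, (v i ⬝ᵥ x) ^ 2 := (Finset.mul_sum _ _ _).symm
    _ ≤ b * ∑ j, x j ^ 2 :=
        mul_le_mul_of_nonneg_left (sum_sq_dotProduct_le_of_orthonormal v hv s x) hb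

theorem stmt_4_general {n k d : ℕ} (A Ad : Matrix (Fin n) (Fin n) ℝ)
    (lam : Fin n → ℝ) (v : Fin n → (Fin n → ℝ))
    (hlam_nonneg : ∀ i, 0 ≤ lam i)
    (hlam_mono : ∀ i j : Fin n, i ≤ j → lam j ≤ lam i)
    (horth : ∀ i j : Fin n, v i ⬝ᵥ v j = if i = j then (1 : ℝ) else 0)
    (hA : A = ∑ i, lam i • Matrix.vecMulVec (v i) (v i))
    (hAd : Ad = ∑ i ∈ Finset.univ.filter (fun i : Fin n => (i : ℕ) < d),
      lam i • Matrix.vecMulVec (v i) (v i))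
    (hdn : d < n)
    (S : Set (Fin n → ℝ))
    (hS : S = {x | (∑ i, x i ^ 2 = 1) ∧ (Function.support x).ncard ≤ k})
    (OPT OPTd : ℝ)
    (hOPT : IsGreatest ((fun x => x ⬝ᵥ A.mulVec x) '' S) OPT)
    (hOPTd : IsGreatest ((fun x => x ⬝ᵥ Ad.mulVec x) '' S) OPTd)
    (hOPTpos : 0 < OPT) :
    1 - lam ⟨d, hdn⟩ / OPT ≤ OPTd / OPT := by
  obtain ⟨⟨x, hxS, hx_opt⟩, -⟩ := hOPT
  have hx_norm : ∑ i, x i ^ 2 = 1 := (hS ▸ hxS).1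
  have hsplit : x ⬝ᵥ A *ᵥ x = x ⬝ᵥ Ad *ᵥ x
      + ∑ i ∈ Finset.univ.filter (fun i : Fin n => ¬ (i : ℕ) < d), lam i * (v i ⬝ᵥ x) ^ 2 := by
    rw [hA, hAd, dotProduct_sum_smul_vecMulVec_mulVec, dotProduct_sum_smul_vecMulVec_mulVec,
      Finset.sum_filter_add_sum_filter_not]
  have htail := sum_mul_sq_dotProduct_le_of_orthonormal v horth
    (Finset.univ.filter fun i : Fin n => ¬ (i : ℕ) < d) lam _ (hlam_nonneg ⟨d, hdn⟩)
    (fun i hi => hlam_mono _ _ (by simpa [Fin.le_def] using hi)) x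
  have hOPTd_ge := hOPTd.2 ⟨x, hxS, rfl⟩
  rw [hx_norm, mul_one] at htail
  rw [one_sub_div hOPTpos.ne', div_le_div_iff_of_pos_right hOPTpos]
  linarith

/-- With `OPT` and `OPT_d` the `k`-sparse maxima of the quadratic forms of `A`
and of its rank-`d` truncation `A_d`, and `OPT > 0`, we have
`OPT_d / OPT ≥ 1 − λ_{d+1} / OPT`. -/
theorem stmt_4 {n k d : ℕ} (A Ad : Matrix (Fin n) (Fin n) ℝ)
    (lam : Fin n → ℝ) (v : Fin n → (Fin n → ℝ))
    (hPSD : A.PosSemidef)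
    (hlam_nonneg : ∀ i, 0 ≤ lam i)
    (hlam_mono : ∀ i j : Fin n, i ≤ j → lam j ≤ lam i)
    (horth : ∀ i j : Fin n, v i ⬝ᵥ v j = if i = j then (1 : ℝ) else 0)
    (hA : A = ∑ i, lam i • Matrix.vecMulVec (v i) (v i))
    (hAd : Ad = ∑ i ∈ Finset.univ.filter (fun i : Fin n => (i : ℕ) < d),
      lam i • Matrix.vecMulVec (v i) (v i))
    (hk1 : 1 ≤ k) (hkn : k ≤ n) (hdn : d < n)
    (S : Set (Fin n → ℝ))
    (hS : S = {x | (∑ i, x i ^ 2 = 1) ∧ (Function.support x).ncard ≤ k})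
    (OPT OPTd : ℝ)
    (hOPT : IsGreatest ((fun x => x ⬝ᵥ A.mulVec x) '' S) OPT)
    (hOPTd : IsGreatest ((fun x => x ⬝ᵥ Ad.mulVec x) '' S) OPTd)
    (hOPTpos : 0 < OPT) :
    1 - lam ⟨d, hdn⟩ / OPT ≤ OPTd / OPT :=
  stmt_4_general A Ad lam v hlam_nonneg hlam_mono horth hA hAd hdn S hS OPT OPTd hOPT hOPTd hOPTpos
end

section
/- Sparse PCA of a rank-d PSD matrix reduces to a double maximization: max{x^T V V^T x : ‖x‖_2=1, ‖x‖_0 ≤ k} = max over unit c ∈ ℝ^d of max over unit k-sparse x of ((Vc)^T x)^2. -/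
open Matrix BigOperators

/-- Sparse PCA of a rank-`d` PSD matrix `A_d = VVᵀ` reduces to a double
maximization: the `k`-sparse maximum of `xᵀVVᵀx` equals the supremum over
unit `c ∈ ℝ^d` and unit `k`-sparse `x` of `((Vc)ᵀx)²`. -/
theorem stmt_11 {n d k : ℕ} (hd : 0 < d) (hk1 : 1 ≤ k) (hkn : k ≤ n)
    (V : Matrix (Fin n) (Fin d) ℝ)
    (S : Set (Fin n → ℝ))
    (hS : S = {x | (∑ i, x i ^ 2 = 1) ∧ (Function.support x).ncard ≤ k}) :
    sSup ((fun x => x ⬝ᵥ (V * Vᵀ).mulVec x) '' S)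
      = sSup {y : ℝ | ∃ (c : Fin d → ℝ) (x : Fin n → ℝ),
          (∑ j, c j ^ 2 = 1) ∧ x ∈ S ∧ y = (V.mulVec c ⬝ᵥ x) ^ 2} := by
  have key : ∀ x : Fin n → ℝ, x ⬝ᵥ (V * Vᵀ).mulVec x = ∑ j, (Vᵀ.mulVec x j) ^ 2 := by
    intro x
    rw [← Matrix.mulVec_mulVec, Matrix.dotProduct_mulVec, ← Matrix.mulVec_transpose]
    simp [dotProduct, sq]
  have keyc : ∀ (c : Fin d → ℝ) (x : Fin n → ℝ),
      V.mulVec c ⬝ᵥ x = ∑ j, c j * Vᵀ.mulVec x j := by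
    intro c x
    rw [dotProduct_comm, Matrix.dotProduct_mulVec, ← Matrix.mulVec_transpose,
      dotProduct_comm]
    rfl
  apply csSup_eq_csSup_of_forall_exists_le
  · rintro y ⟨x, hx, rfl⟩
    simp only
    set w := Vᵀ.mulVec x with hw
    by_cases h0 : ∑ j, w j ^ 2 = 0
    · refine ⟨(V.mulVec (fun j => if j = ⟨0, hd⟩ then 1 else 0) ⬝ᵥ x) ^ 2,
        ⟨_, x, ?_, hx, rfl⟩, ?_⟩
      · simp [sq]
      · have hz : ∀ j, w j = 0 := by
          intro j
          have := (Finset.sum_eq_zero_iff_of_nonneg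
            (fun i _ => sq_nonneg (w i))).1 h0 j (Finset.mem_univ j)
          exact pow_eq_zero_iff (by norm_num) |>.1 this
        rw [key, keyc, h0]
        simp only [hz, mul_zero, Finset.sum_const_zero] at *
        positivity
    · have hpos : 0 < ∑ j, w j ^ 2 :=
        lt_of_le_of_ne (Finset.sum_nonneg fun i _ => sq_nonneg _) (Ne.symm h0)
      set r := Real.sqrt (∑ j, w j ^ 2) with hr
      have hrpos : 0 < r := Real.sqrt_pos.2 hpos
      have hr2 : r ^ 2 = ∑ j, w j ^ 2 := Real.sq_sqrt hpos.le
      refine ⟨(V.mulVec (fun j => r⁻¹ * w j) ⬝ᵥ x) ^ 2, ⟨_, x, ?_, hx, rfl⟩, ?_⟩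
      · have : ∑ j, (r⁻¹ * w j) ^ 2 = r⁻¹ ^ 2 * ∑ j, w j ^ 2 := by
          rw [Finset.mul_sum]; congr 1; ext j; ring
        rw [this, ← hr2]
        field_simp
      · rw [key, keyc]
        have : ∑ j, (r⁻¹ * w j) * w j = r⁻¹ * ∑ j, w j ^ 2 := by
          rw [Finset.mul_sum]; congr 1; ext j; ring
        rw [this, ← hr2]
        have h2 : r⁻¹ * r ^ 2 = r := by field_simp
        rw [h2]
  · rintro y ⟨c, x, hc, hx, rfl⟩
    refine ⟨x ⬝ᵥ (V * Vᵀ).mulVec x, ⟨x, hx, rfl⟩, ?_⟩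
    rw [key, keyc]
    calc (∑ j, c j * Vᵀ.mulVec x j) ^ 2
        ≤ (∑ j, c j ^ 2) * ∑ j, (Vᵀ.mulVec x j) ^ 2 :=
          Finset.sum_mul_sq_le_sq_mul_sq _ _ _
      _ = ∑ j, (Vᵀ.mulVec x j) ^ 2 := by rw [hc, one_mul]
end

section
/- Let V ∈ ℝ^{n×2} have rows in general position. As c ranges over all unit vectors in ℝ^2, the number of distinct index sets I_k(Vc) (the support of the top-k absolute entries of Vc, when the top k are uniquely determined) is at most 4·binom(n,2) + 2. -/
/-!
Up to sign, every unit vector of `ℝ²` is `(cos θ, sin θ)` with `θ ∈ [0, π)`, and the sign does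
not change `I_k`. If distinct supports `I ≠ J` of the same size are realised at angles
`θ₁ ≤ θ₂`, then some `a ∈ I \ J` and `b ∈ J \ I` swap the order of their absolute values, so by
the intermediate value theorem `|(V u_θ)_a| = |(V u_θ)_b|` at some `θ` strictly between them.
There `(V_a - V_b) · u_θ = 0` or `(V_a + V_b) · u_θ = 0`, and a nonzero linear form vanishes at
most once on `[0, π)`; over ordered pairs this gives at most `2 n (n - 1) = 4·C(n,2)` crossing
angles. The angles realising distinct supports are thus pairwise distinct and separated by
crossings, so there are at most `4·C(n,2) + 1` supports.
-/

open Matrix BigOperators Set Real Finset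

theorem Set.ncard_le_ncard_add_one_of_exists_between {α : Type*} [LinearOrder α] {s t : Set α}
    (ht : t.Finite) (h : ∀ a ∈ s, ∀ b ∈ s, a < b → ∃ z ∈ t, a < z ∧ z < b) :
    s.ncard ≤ t.ncard + 1 := by
  classical
  let rank : α → ℕ := fun a => #(ht.toFinset.filter (· < a))
  have hrank : StrictMonoOn rank s := by
    intro a ha b hb hab
    obtain ⟨z, hz, haz, hzb⟩ := h a ha b hb hab
    refine Finset.card_lt_card ((Finset.ssubset_iff_of_subset ?_).2 ⟨z, ?_, ?_⟩)
    · intro x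
      simp only [Finset.mem_filter]
      exact fun ⟨hx, hxa⟩ => ⟨hx, hxa.trans hab⟩
    · simpa [hz] using hzb
    · simp [haz.le]
  calc s.ncard ≤ (Finset.range (t.ncard + 1) : Set ℕ).ncard :=
        ncard_le_ncard_of_injOn rank (fun a _ => by
          simpa [Nat.lt_succ_iff, ncard_eq_toFinset_card t ht] using
            Finset.card_filter_le ht.toFinset (· < a)) hrank.injOn
    _ = t.ncard + 1 := by rw [ncard_coe_finset, Finset.card_range]

theorem exists_mem_Ico_eq_cos_sin_or_neg (c : Fin 2 → ℝ) (hc : ∑ t, c t ^ 2 = 1) :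
    ∃ θ ∈ Ico 0 π, c = ![cos θ, sin θ] ∨ c = -![cos θ, sin θ] := by
  set z : ℂ := ⟨c 0, c 1⟩
  have hz : ‖z‖ = 1 := by
    rw [Complex.norm_def, Complex.normSq_apply, ← sq, ← sq]
    simpa [Fin.sum_univ_two] using hc
  have hcos : cos z.arg = c 0 := by simpa [hz] using Complex.norm_mul_cos_arg z
  have hsin : sin z.arg = c 1 := by simpa [hz] using Complex.norm_mul_sin_arg z
  have hc' : c = ![cos z.arg, sin z.arg] := by
    ext t; fin_cases t <;> simp [hcos, hsin]
  set m := toIcoDiv pi_pos 0 z.arg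
  have hθ : toIcoMod pi_pos 0 z.arg = z.arg - m * π := by
    rw [← self_sub_toIcoDiv_zsmul, zsmul_eq_mul]
  refine ⟨_, toIcoMod_mem_Ico' pi_pos z.arg, ?_⟩
  rw [hθ, cos_sub_int_mul_pi, sin_sub_int_mul_pi]
  rcases m.even_or_odd with hm | hm
  · left; simpa [hm.neg_one_zpow] using hc'
  · right; ext t; fin_cases t <;> simp [hm.neg_one_zpow, hcos, hsin]

def zeroAngles (w : Fin 2 → ℝ) : Set ℝ :=
  {θ ∈ Ico 0 π | w ⬝ᵥ ![cos θ, sin θ] = 0}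

theorem zeroAngles_subsingleton {w : Fin 2 → ℝ} (hw : w ≠ 0) : (zeroAngles w).Subsingleton := by
  rintro θ₁ ⟨⟨h₁0, h₁π⟩, e₁⟩ θ₂ ⟨⟨h₂0, h₂π⟩, e₂⟩
  simp only [dotProduct, Fin.sum_univ_two, Matrix.cons_val_zero, Matrix.cons_val_one] at e₁ e₂
  have h0 : w 0 * sin (θ₂ - θ₁) = 0 := by
    rw [sin_sub]; linear_combination sin θ₂ * e₁ - sin θ₁ * e₂
  have h1 : w 1 * sin (θ₂ - θ₁) = 0 := by
    rw [sin_sub]; linear_combination cos θ₁ * e₂ - cos θ₂ * e₁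
  have hsin : sin (θ₂ - θ₁) = 0 := by
    by_contra hne
    refine hw (funext fun t => ?_)
    fin_cases t
    exacts [(mul_eq_zero.1 h0).resolve_right hne, (mul_eq_zero.1 h1).resolve_right hne]
  have := (sin_eq_zero_iff_of_lt_of_lt (by linarith) (by linarith)).1 hsin
  linarith

section

variable {ι : Type*}

-- `I = I_k(x)` for `k = #I`, in the case where the top `k` entries are strictly determined.
def IsTopSupport (x : ι → ℝ) (I : Finset ι) : Prop :=
  ∀ a ∈ I, ∀ b ∉ I, |x b| < |x a|

theorem isTopSupport_neg_iff {x : ι → ℝ} {I : Finset ι} :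
    IsTopSupport (-x) I ↔ IsTopSupport x I := by
  simp only [IsTopSupport, Pi.neg_apply, abs_neg]

theorem IsTopSupport.exists_swap {x y : ι → ℝ} {I J : Finset ι}
    (hI : IsTopSupport x I) (hJ : IsTopSupport y J) (hcard : #I = #J) (hIJ : I ≠ J) :
    ∃ a b, |x b| < |x a| ∧ |y a| < |y b| := by
  have hJI : ¬J ⊆ I := fun h => hIJ (Finset.eq_of_subset_of_card_le h hcard.le).symm
  have hIJ' : ¬I ⊆ J := fun h => hIJ (Finset.eq_of_subset_of_card_le h hcard.ge)
  obtain ⟨a, haI, haJ⟩ := Finset.not_subset.1 hIJ'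
  obtain ⟨b, hbJ, hbI⟩ := Finset.not_subset.1 hJI
  exact ⟨a, b, hI a haI b hbI, hJ b hbJ a haJ⟩

-- The only angles at which the top-`k` support of `V (cos θ, sin θ)` can change.
def crossings (V : Matrix ι (Fin 2) ℝ) : Set ℝ :=
  {θ ∈ Ico 0 π | ∃ i j, i ≠ j ∧ |(V *ᵥ ![cos θ, sin θ]) i| = |(V *ᵥ ![cos θ, sin θ]) j|}

theorem exists_mem_crossings_between (V : Matrix ι (Fin 2) ℝ) {I J : Finset ι}
    (hcard : #I = #J) (hIJ : I ≠ J) {θ₁ θ₂ : ℝ} (h₁ : 0 ≤ θ₁) (h₂ : θ₂ < π) (hle : θ₁ ≤ θ₂)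
    (hI : IsTopSupport (V *ᵥ ![cos θ₁, sin θ₁]) I)
    (hJ : IsTopSupport (V *ᵥ ![cos θ₂, sin θ₂]) J) :
    ∃ z ∈ crossings V, θ₁ < z ∧ z < θ₂ := by
  obtain ⟨a, b, hab₁, hab₂⟩ := hI.exists_swap hJ hcard hIJ
  have hab : a ≠ b := by rintro rfl; exact hab₁.false
  let gap : ℝ → ℝ := fun θ => |(V *ᵥ ![cos θ, sin θ]) a| - |(V *ᵥ ![cos θ, sin θ]) b|
  have hgap : ContinuousOn gap (Icc θ₁ θ₂) := by fun_prop
  obtain ⟨z, hz, hz0⟩ := intermediate_value_Ioo' hle hgap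
    ⟨sub_neg.2 hab₂, sub_pos.2 hab₁⟩
  exact ⟨z, ⟨⟨by linarith [hz.1], by linarith [hz.2]⟩, a, b, hab, sub_eq_zero.1 hz0⟩, hz⟩

variable [Fintype ι]

theorem crossings_subset_biUnion (V : Matrix ι (Fin 2) ℝ) :
    crossings V ⊆ ⋃ p ∈ (univ : Finset ι).offDiag,
      zeroAngles (V p.1 - V p.2) ∪ zeroAngles (V p.1 + V p.2) := by
  rintro θ ⟨hθ, i, j, hij, heq⟩
  refine mem_iUnion₂.2 ⟨(i, j), by simpa using hij, ?_⟩
  rcases abs_eq_abs.1 heq with h | h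
  · exact Or.inl ⟨hθ, by rw [sub_dotProduct]; exact sub_eq_zero.2 h⟩
  · exact Or.inr ⟨hθ, by rw [add_dotProduct]; exact add_eq_zero_iff_eq_neg.2 h⟩

theorem encard_crossings_le {V : Matrix ι (Fin 2) ℝ}
    (hV : ∀ i j, i ≠ j → V i ≠ V j ∧ V i ≠ -V j) :
    (crossings V).encard ≤ (4 * (Fintype.card ι).choose 2 : ℕ) := by
  classical
  have hpair : ∀ p ∈ (univ : Finset ι).offDiag,
      (zeroAngles (V p.1 - V p.2) ∪ zeroAngles (V p.1 + V p.2)).encard ≤ 2 := by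
    intro p hp
    have hp : p.1 ≠ p.2 := (Finset.mem_offDiag.1 hp).2.2
    have hsub := zeroAngles_subsingleton (sub_ne_zero.2 (hV _ _ hp).1)
    have hadd := zeroAngles_subsingleton fun h => (hV _ _ hp).2 (eq_neg_of_add_eq_zero_left h)
    calc _ ≤ _ := encard_union_le _ _
      _ ≤ 1 + 1 := add_le_add (encard_le_one_iff_subsingleton.2 hsub)
          (encard_le_one_iff_subsingleton.2 hadd)
      _ = 2 := one_add_one_eq_two
  have hcount : 2 * #(univ : Finset ι).offDiag = 4 * (Fintype.card ι).choose 2 := by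
    rw [Finset.offDiag_card, Finset.card_univ, Nat.choose_two_right, ← Nat.mul_sub_one]
    obtain ⟨m, hm⟩ := Nat.even_mul_pred_self (Fintype.card ι)
    omega
  calc (crossings V).encard
      ≤ (⋃ p ∈ (univ : Finset ι).offDiag,
          zeroAngles (V p.1 - V p.2) ∪ zeroAngles (V p.1 + V p.2)).encard :=
        encard_le_encard (crossings_subset_biUnion V)
    _ ≤ ∑ p ∈ (univ : Finset ι).offDiag,
          (zeroAngles (V p.1 - V p.2) ∪ zeroAngles (V p.1 + V p.2)).encard :=
        Finset.set_encard_biUnion_le _ _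
    _ ≤ ∑ _p ∈ (univ : Finset ι).offDiag, 2 := Finset.sum_le_sum hpair
    _ = (4 * (Fintype.card ι).choose 2 : ℕ) := by
        rw [Finset.sum_const, nsmul_eq_mul, ← hcount]; push_cast; ring

end

theorem stmt_13_general {n k : ℕ} (V : Matrix (Fin n) (Fin 2) ℝ)
    (hgen : ∀ i j : Fin n, i ≠ j →
      (fun t => V i t) ≠ (fun t => V j t) ∧ (fun t => V i t) ≠ (fun t => -V j t)) :
    {I : Finset (Fin n) | ∃ c : Fin 2 → ℝ, (∑ t, c t ^ 2 = 1) ∧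
        I.card = k ∧
        (∀ a ∈ I, ∀ b ∉ I, |V.mulVec c b| < |V.mulVec c a|)}.ncard
      ≤ 4 * n.choose 2 + 2 := by
  set S := {I : Finset (Fin n) | ∃ c : Fin 2 → ℝ, (∑ t, c t ^ 2 = 1) ∧
        I.card = k ∧ IsTopSupport (V *ᵥ c) I}
  have hrep : ∀ I ∈ S, ∃ θ ∈ Ico 0 π, IsTopSupport (V *ᵥ ![cos θ, sin θ]) I := by
    rintro I ⟨c, hc, -, hI⟩
    obtain ⟨θ, hθ, rfl | rfl⟩ := exists_mem_Ico_eq_cos_sin_or_neg c hc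
    · exact ⟨θ, hθ, hI⟩
    · exact ⟨θ, hθ, by rwa [mulVec_neg, isTopSupport_neg_iff] at hI⟩
  choose! g hg hgtop using hrep
  have hbetween : ∀ I ∈ S, ∀ J ∈ S, I ≠ J → g I ≤ g J →
      ∃ z ∈ crossings V, g I < z ∧ z < g J := fun I hI J hJ hIJ hle =>
    exists_mem_crossings_between V (hI.choose_spec.2.1.trans hJ.choose_spec.2.1.symm) hIJ
      (hg I hI).1 (hg J hJ).2 hle (hgtop I hI) (hgtop J hJ)
  have hinj : InjOn g S := fun I hI J hJ hgIJ => by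
    by_contra hIJ
    obtain ⟨z, -, h₁, h₂⟩ := hbetween I hI J hJ hIJ hgIJ.le
    exact (h₁.trans h₂).ne hgIJ
  obtain ⟨hfin, hncard⟩ := encard_le_coe_iff_finite_ncard_le.1 (encard_crossings_le (V := V) hgen)
  calc S.ncard = (g '' S).ncard := hinj.ncard_image.symm
    _ ≤ (crossings V).ncard + 1 := by
        refine ncard_le_ncard_add_one_of_exists_between hfin ?_
        rintro _ ⟨I, hI, rfl⟩ _ ⟨J, hJ, rfl⟩ hlt
        exact hbetween I hI J hJ (by rintro rfl; exact hlt.false) hlt.le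
    _ ≤ 4 * n.choose 2 + 2 := by simp only [Fintype.card_fin] at hncard; omega

/-- Rank-2 spannogram support count: for `V ∈ ℝ^{n×2}` with rows in general
position, as `c` ranges over unit vectors of `ℝ²` the number of distinct
strict top-`k` index sets `I_k(Vc)` is at most `4·C(n,2) + 2`. -/
theorem stmt_13 {n k : ℕ} (V : Matrix (Fin n) (Fin 2) ℝ)
    (hrows_ne : ∀ i : Fin n, (fun t => V i t) ≠ 0)
    (hgen : ∀ i j : Fin n, i ≠ j →
      (fun t => V i t) ≠ (fun t => V j t) ∧ (fun t => V i t) ≠ (fun t => -V j t)) :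
    {I : Finset (Fin n) | ∃ c : Fin 2 → ℝ, (∑ t, c t ^ 2 = 1) ∧
        I.card = k ∧
        (∀ a ∈ I, ∀ b ∉ I, |V.mulVec c b| < |V.mulVec c a|)}.ncard
      ≤ 4 * n.choose 2 + 2 :=
  stmt_13_general V hgen
end
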